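/- arXiv:2006.03048 — 5 statements merged into one kernel-verified Lean document; each statement's English description precedes it below -/
import Mathlib

section
/- For all real N ≥ 2, all integers K ≥ 2, and all ε ≥ 0, the ratio of the AL-PIR upper-bound constants satisfies ((1 + 1/(N-1)) · (1/((N·e^ε)^(K-1) - 1))) / ((1 + 1/(N·e^ε - 1)) · (e^ε/(N^(K-1) - 1))) ≤ e^(-2ε) ≤ 1. -/
/-!
With `M = N e^ε` and `m = K - 1`, the factors `1 + 1/(x - 1) = x/(x - 1)` combine with
`x^m - 1` into geometric sums, so the ratio equals
`(1 + N + ⋯ + N^(m-1)) / (1 + M + ⋯ + M^(m-1)) · e^(-2ε)`,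
and the quotient of geometric sums is at most `1` because `N ≤ M`.
-/

open Finset

theorem geom_sum_le_geom_sum_of_le {R : Type*} [CommSemiring R] [PartialOrder R]
    [IsOrderedRing R] {x y : R} (hx : 0 ≤ x) (hxy : x ≤ y) (n : ℕ) :
    ∑ i ∈ range n, x ^ i ≤ ∑ i ∈ range n, y ^ i :=
  sum_le_sum fun i _ => pow_le_pow_left₀ hx hxy i

theorem one_add_one_div_sub_one {x : ℝ} (hx : x ≠ 1) : 1 + 1 / (x - 1) = x / (x - 1) := by
  field_simp [sub_ne_zero.mpr hx]
  ring

theorem alpir_ratio_eq_geom_sum_div {x y E : ℝ} (hx : 1 < x) (hy : 1 < y) (hE : E ≠ 0)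
    {n : ℕ} (hn : n ≠ 0) :
    ((1 + 1 / (x - 1)) * (1 / (y ^ n - 1))) / ((1 + 1 / (y - 1)) * (E / (x ^ n - 1))) =
      (∑ i ∈ range n, x ^ i) / (∑ i ∈ range n, y ^ i) * (x / (y * E)) := by
  have hx1 : x - 1 ≠ 0 := sub_ne_zero.mpr hx.ne'
  have hy1 : y - 1 ≠ 0 := sub_ne_zero.mpr hy.ne'
  have hxn : x ^ n - 1 ≠ 0 := sub_ne_zero.mpr (one_lt_pow₀ hx hn).ne'
  have hyn : y ^ n - 1 ≠ 0 := sub_ne_zero.mpr (one_lt_pow₀ hy hn).ne'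
  rw [one_add_one_div_sub_one hx.ne', one_add_one_div_sub_one hy.ne',
    geom_sum_eq hx.ne', geom_sum_eq hy.ne']
  field_simp

theorem stmt_0 (N ε : ℝ) (K : ℕ) (hN : 2 ≤ N) (hK : 2 ≤ K) (hε : 0 ≤ ε) :
    ((1 + 1/(N-1)) * (1/((N * Real.exp ε)^(K-1) - 1))) /
      ((1 + 1/(N * Real.exp ε - 1)) * (Real.exp ε/(N^(K-1) - 1)))
      ≤ Real.exp (-(2*ε)) ∧ Real.exp (-(2*ε)) ≤ 1 := by
  set E := Real.exp ε
  have hE : 1 ≤ E := Real.one_le_exp hε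
  have hN1 : 1 < N := by linarith
  have hNE : N ≤ N * E := le_mul_of_one_le_right (by linarith) hE
  have hexp : N / (N * E * E) = Real.exp (-(2 * ε)) := by
    rw [Real.exp_neg, two_mul, Real.exp_add]
    change N / (N * E * E) = (E * E)⁻¹
    field_simp
  refine ⟨?_, Real.exp_le_one_iff.mpr (by linarith)⟩
  rw [alpir_ratio_eq_geom_sum_div hN1 (hN1.trans_le hNE) (by positivity) (by omega), hexp]
  have hsum : (∑ i ∈ range (K - 1), N ^ i) / ∑ i ∈ range (K - 1), (N * E) ^ i ≤ 1 :=
    div_le_one_of_le₀ (geom_sum_le_geom_sum_of_le (by linarith) hNE _)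
      (sum_nonneg fun i _ => by positivity)
  exact mul_le_of_le_one_left (Real.exp_pos _).le hsum
end

section
/- For all real N ≥ 2, integers K ≥ 2, and ε ≥ 0, define δ1(ε) = (N^(K-1)-1)/((N-1)·(e^ε + N^(K-1) - 1)) and δ2(ε) = ((N·e^ε)^(K-1)-1)/((N·e^ε - 1)·(N·e^ε)^(K-1)). Then δ1(ε) ≥ δ2(ε). -/
/-!
Write `m = K - 1` and `E = exp ε ≥ 1`. The right-hand side is the geometric sum
`∑_{i=1}^{m} (N E)⁻ⁱ`, and since `E⁻ⁱ ≤ E⁻¹` each term is at most `E⁻¹ N⁻ⁱ`; summing back gives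
`(N^m - 1) / ((N - 1) N^m E)`. Finally `E + N^m - 1 ≤ N^m E`, as `(N^m - 1)(E - 1) ≥ 0`.
-/

open Finset

theorem sum_range_inv_pow_succ {K : Type*} [Field K] {y : K} (hy : y ≠ 0) (hy1 : y ≠ 1) (m : ℕ) :
    ∑ i ∈ range m, y⁻¹ ^ (i + 1) = (y ^ m - 1) / ((y - 1) * y ^ m) := by
  have hy1' : y - 1 ≠ 0 := sub_ne_zero.mpr hy1
  induction m with
  | zero => simp
  | succ n ih =>
    rw [sum_range_succ, ih, inv_pow]
    field_simp
    ring

theorem sum_range_mul_pow_succ_le {R : Type*} [CommSemiring R] [PartialOrder R]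
    [IsOrderedRing R] {a b : R} (ha : 0 ≤ a) (hb : 0 ≤ b) (hb1 : b ≤ 1) (m : ℕ) :
    ∑ i ∈ range m, (a * b) ^ (i + 1) ≤ b * ∑ i ∈ range m, a ^ (i + 1) := by
  rw [mul_sum]
  refine sum_le_sum fun i _ => ?_
  rw [mul_pow, mul_comm b]
  exact mul_le_mul_of_nonneg_left (pow_le_of_le_one hb hb1 i.succ_ne_zero) (pow_nonneg ha _)

theorem add_sub_one_le_mul {a b : ℝ} (ha : 1 ≤ a) (hb : 1 ≤ b) : a + b - 1 ≤ a * b := by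
  nlinarith [mul_nonneg (sub_nonneg.mpr ha) (sub_nonneg.mpr hb)]

theorem stmt_2_general (N ε : ℝ) (K : ℕ) (hN : 2 ≤ N) (hε : 0 ≤ ε) :
    (N^(K-1) - 1)/((N-1) * (Real.exp ε + N^(K-1) - 1))
      ≥ ((N * Real.exp ε)^(K-1) - 1)/((N * Real.exp ε - 1) * (N * Real.exp ε)^(K-1)) := by
  set E := Real.exp ε
  set m := K - 1
  have hE : 1 ≤ E := Real.one_le_exp hε
  have hNm : 1 ≤ N ^ m := one_le_pow₀ (by linarith)
  have hNE : 2 ≤ N * E := by nlinarith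
  rw [ge_iff_le, ← sum_range_inv_pow_succ (by positivity) (by linarith) m]
  calc ∑ i ∈ range m, (N * E)⁻¹ ^ (i + 1)
      ≤ E⁻¹ * ∑ i ∈ range m, N⁻¹ ^ (i + 1) := by
        rw [mul_inv]
        exact sum_range_mul_pow_succ_le (by positivity) (by positivity) (inv_le_one_of_one_le₀ hE) m
    _ = (N ^ m - 1) / ((N - 1) * (N ^ m * E)) := by
        rw [sum_range_inv_pow_succ (by positivity) (by linarith) m]
        field_simp
    _ ≤ (N ^ m - 1) / ((N - 1) * (E + N ^ m - 1)) := by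
        have hN1 : 0 < N - 1 := by linarith
        refine div_le_div_of_nonneg_left (by linarith) (mul_pos hN1 (by linarith)) ?_
        rw [add_comm E]
        exact mul_le_mul_of_nonneg_left (add_sub_one_le_mul hNm hE) hN1.le

theorem stmt_2 (N ε : ℝ) (K : ℕ) (hN : 2 ≤ N) (hK : 2 ≤ K) (hε : 0 ≤ ε) :
    (N^(K-1) - 1)/((N-1) * (Real.exp ε + N^(K-1) - 1))
      ≥ ((N * Real.exp ε)^(K-1) - 1)/((N * Real.exp ε - 1) * (N * Real.exp ε)^(K-1)) :=
  stmt_2_general N ε K hN hε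
end

section
/- For all real N ≥ 2, integers K ≥ 2, real ε ≥ 0 and δ with 0 ≤ δ ≤ δ2(ε) where δ2(ε) = ((N·e^ε)^(K-1)-1)/((N·e^ε-1)·(N·e^ε)^(K-1)), the upper bound d1(ε,δ) = 1 + 1/(N-1) - δ·e^ε/(N^(K-1)-1) is at least the lower bound d2(ε,δ) = 1 + 1/(N·e^ε - 1) - δ/((N·e^ε)^(K-1) - 1). -/
theorem stmt_3 (N ε δ : ℝ) (K : ℕ) (hN : 2 ≤ N) (hK : 2 ≤ K) (hε : 0 ≤ ε)
    (hδ0 : 0 ≤ δ)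
    (hδ2 : δ ≤ ((N * Real.exp ε)^(K-1) - 1)/((N * Real.exp ε - 1) * (N * Real.exp ε)^(K-1))) :
    1 + 1/(N-1) - δ * Real.exp ε/(N^(K-1) - 1)
      ≥ 1 + 1/(N * Real.exp ε - 1) - δ/((N * Real.exp ε)^(K-1) - 1) := by
  set E := Real.exp ε with hEdef
  have hE1 : (1:ℝ) ≤ E := Real.one_le_exp hε
  set m := K - 1 with hm
  have hm0 : m ≠ 0 := by omega
  have hm1 : (1:ℝ) ≤ (m:ℝ) := by exact_mod_cast Nat.one_le_iff_ne_zero.mpr hm0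
  have hNm : N ≤ N ^ m := le_self_pow₀ (by linarith) hm0
  have hM2 : (2:ℝ) ≤ N * E := by nlinarith
  have hMm : N * E ≤ (N * E) ^ m := le_self_pow₀ (by linarith) hm0
  have hA0 : (0:ℝ) < N ^ m - 1 := by linarith
  have hB0 : (0:ℝ) < (N * E) ^ m - 1 := by linarith
  have hN0 : (0:ℝ) < N - 1 := by linarith
  have hM0 : (0:ℝ) < N * E - 1 := by linarith
  have hBpos : (0:ℝ) < (N * E) ^ m := by linarith
  have hBA : (N * E) ^ m = N ^ m * E ^ m := mul_pow N E m
  have hEm : (1:ℝ) ≤ E ^ m := one_le_pow₀ hE1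
  -- geometric sum bound
  have hgeom : E ^ m * E - 1 ≤ ((m:ℝ) + 1) * E ^ m * (E - 1) := by
    induction m with
    | zero => simp
    | succ k ih =>
      have hEk : (1:ℝ) ≤ E ^ k := one_le_pow₀ hE1
      have hEk1 : (1:ℝ) ≤ E ^ (k+1) := one_le_pow₀ hE1
      have hps : E ^ (k+1) = E ^ k * E := pow_succ E k
      push_cast
      rw [hps]
      nlinarith [mul_le_mul_of_nonneg_left ih (by linarith : (0:ℝ) ≤ E),
        mul_nonneg (mul_nonneg (by positivity : (0:ℝ) ≤ E ^ k) (by linarith : (0:ℝ) ≤ E)) (by linarith : (0:ℝ) ≤ E - 1)]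
  -- Bernoulli
  have hbern : 1 + (m:ℝ) * (N - 1) ≤ N ^ m := by
    have h := one_add_mul_le_pow (by linarith : (-2:ℝ) ≤ N - 1) m
    have h2 : (1:ℝ) + (N - 1) = N := by ring
    rwa [h2] at h
  -- key polynomial inequality
  have p2 : (N - 1) * ((m:ℝ) + 1) ≤ N * (N ^ m - 1) := by nlinarith
  have p2' : N ^ m * ((N - 1) * ((m:ℝ) + 1)) ≤ N ^ m * (N * (N ^ m - 1)) :=
    mul_le_mul_of_nonneg_left p2 (by positivity)
  have p3 : N ^ m * ((N - 1) * ((m:ℝ) + 1)) * (E ^ m * (E - 1)) ≤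
      N ^ m * (N * (N ^ m - 1)) * (E ^ m * (E - 1)) :=
    mul_le_mul_of_nonneg_right p2' (by nlinarith [mul_nonneg (by positivity : (0:ℝ) ≤ E ^ m) (by linarith : (0:ℝ) ≤ E - 1)])
  have p1 : (N - 1) * N ^ m * (E ^ m * E - 1) ≤ (N - 1) * N ^ m * (((m:ℝ) + 1) * E ^ m * (E - 1)) :=
    mul_le_mul_of_nonneg_left hgeom (by positivity)
  have hD : (N - 1) * (N ^ m * (E ^ m * E) - E - N ^ m + 1) ≤
      N * (E - 1) * (N ^ m * E ^ m) * (N ^ m - 1) := by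
    nlinarith [p1, p3, mul_nonneg (by linarith : (0:ℝ) ≤ N - 1) (by linarith : (0:ℝ) ≤ E - 1)]
  -- coefficient of δ is nonnegative
  have hc : 1 / ((N * E) ^ m - 1) ≤ E / (N ^ m - 1) := by
    rw [div_le_div_iff₀ hB0 hA0, hBA]
    nlinarith [mul_le_mul_of_nonneg_left hEm (by positivity : (0:ℝ) ≤ E * N ^ m),
      mul_nonneg (by linarith : (0:ℝ) ≤ E - 1) (by linarith : (0:ℝ) ≤ N ^ m - 1)]
  -- the bound at δ = δ₂
  have key : ((N * E) ^ m - 1) / ((N * E - 1) * (N * E) ^ m) * (E / (N ^ m - 1) - 1 / ((N * E) ^ m - 1))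
      ≤ 1 / (N - 1) - 1 / (N * E - 1) := by
    rw [div_sub_div _ _ (ne_of_gt hA0) (ne_of_gt hB0), div_mul_div_comm,
        div_sub_div _ _ (ne_of_gt hN0) (ne_of_gt hM0),
        div_le_div_iff₀ (by positivity) (by positivity), hBA]
    have hcoef : (0:ℝ) ≤ (N * E - 1) * (N ^ m * E ^ m - 1) := by
      rw [← hBA]; positivity
    linarith [mul_le_mul_of_nonneg_left hD hcoef]
  have step : δ * (E / (N ^ m - 1) - 1 / ((N * E) ^ m - 1))
      ≤ ((N * E) ^ m - 1) / ((N * E - 1) * (N * E) ^ m) * (E / (N ^ m - 1) - 1 / ((N * E) ^ m - 1)) :=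
    mul_le_mul_of_nonneg_right hδ2 (by linarith)
  have hsplit : δ * E / (N ^ m - 1) = δ * (E / (N ^ m - 1)) := mul_div_assoc δ E _
  have hsplit2 : δ / ((N * E) ^ m - 1) = δ * (1 / ((N * E) ^ m - 1)) := by
    rw [mul_one_div]
  have hexp : δ * (E / (N ^ m - 1) - 1 / ((N * E) ^ m - 1))
      = δ * (E / (N ^ m - 1)) - δ * (1 / ((N * E) ^ m - 1)) := mul_sub δ _ _
  rw [ge_iff_le, hsplit, hsplit2]
  linarith [step, key, hexp]
end

section
/- For all real N ≥ 2, integers K ≥ 2, real ε ≥ 0 and real δ with 0 ≤ δ ≤ δ2(ε), the multiplicative gap satisfies d1(ε,δ)/d2(ε,δ) ≤ (N - e^(-ε))/(N - 1), where d1(ε,δ) = 1 + 1/(N-1) - δ·e^ε/(N^(K-1)-1) and d2(ε,δ) = 1 + 1/(N·e^ε-1) - δ/((N·e^ε)^(K-1)-1), and δ2(ε) = ((N·e^ε)^(K-1)-1)/((N·e^ε-1)·(N·e^ε)^(K-1)). -/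
/-!
With `E = exp ε`, `A = N^(K-1)`, `B = (N E)^(K-1)` and `r = (N - E⁻¹)/(N - 1)`, the factor `r`
maps the δ-free part `N E/(N E - 1)` of the denominator exactly onto the δ-free part
`N/(N - 1)` of the numerator. So it suffices that `r` times the δ-term of the denominator is
at most the δ-term of the numerator, `r · δ/(B - 1) ≤ E · δ/(A - 1)`; this follows from
`r ≤ E` and `A ≤ B`. The bound on δ makes the δ-term of the denominator at most
`1/(N E - 1)`, so the denominator is at least 1.
-/

open Real

lemma sub_div_sub_le_of_mul_le {p q a b r : ℝ} (hq : r * q = p) (hb : r * b ≤ a)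
    (hpos : 0 < q - b) : (p - a) / (q - b) ≤ r := by
  rw [div_le_iff₀ hpos]
  linarith [mul_sub r q b]

lemma sub_inv_div_sub_one_mul_one_add_one_div {N E : ℝ} (hN : N ≠ 1) (hE : E ≠ 0)
    (hNE : N * E ≠ 1) : (N - E⁻¹) / (N - 1) * (1 + 1 / (N * E - 1)) = 1 + 1 / (N - 1) := by
  have hN' : N - 1 ≠ 0 := sub_ne_zero.mpr hN
  have hNE' : N * E - 1 ≠ 0 := sub_ne_zero.mpr hNE
  field_simp
  ring

lemma sub_inv_div_sub_one_le {N E : ℝ} (hN : 2 ≤ N) (hE : 1 ≤ E) : (N - E⁻¹) / (N - 1) ≤ E := by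
  have hEpos : 0 < E := by linarith
  -- `E + E⁻¹ ≥ 2` reduces the claim to `(E - 1)(N - 2) ≥ 0`.
  have hAMGM : 2 - E ≤ E⁻¹ := by
    nlinarith [sq_nonneg (E - 1), mul_inv_cancel₀ hEpos.ne', inv_pos.mpr hEpos]
  rw [div_le_iff₀ (by linarith)]
  nlinarith

lemma div_sub_one_le_one_div_sub_one {x y δ : ℝ} (hx : 1 < x) (hy : 1 < y)
    (hδ : δ ≤ (y - 1) / ((x - 1) * y)) : δ / (y - 1) ≤ 1 / (x - 1) := by
  have hx' : 0 < x - 1 := by linarith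
  have hy' : 0 < y - 1 := by linarith
  calc δ / (y - 1) ≤ 1 / ((x - 1) * y) := by
        rw [div_le_iff₀ hy', div_mul_eq_mul_div, one_mul]
        rwa [le_div_iff₀ (by positivity)] at hδ ⊢
    _ ≤ 1 / (x - 1) :=
        one_div_le_one_div_of_le hx' (le_mul_of_one_le_right hx'.le hy.le)

theorem stmt_4 (N ε δ : ℝ) (K : ℕ) (hN : 2 ≤ N) (hK : 2 ≤ K) (hε : 0 ≤ ε)
    (hδ0 : 0 ≤ δ)
    (hδ2 : δ ≤ ((N * Real.exp ε)^(K-1) - 1)/((N * Real.exp ε - 1) * (N * Real.exp ε)^(K-1))) :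
    (1 + 1/(N-1) - δ * Real.exp ε/(N^(K-1) - 1)) /
      (1 + 1/(N * Real.exp ε - 1) - δ/((N * Real.exp ε)^(K-1) - 1))
      ≤ (N - Real.exp (-ε))/(N - 1) := by
  rw [exp_neg]
  set E := exp ε
  have hE : 1 ≤ E := one_le_exp hε
  have hN_le : N ≤ N * E := le_mul_of_one_le_right (by linarith) hE
  have hA : 1 < N ^ (K - 1) := one_lt_pow₀ (by linarith) (by omega)
  have hAB : N ^ (K - 1) ≤ (N * E) ^ (K - 1) := pow_le_pow_left₀ (by linarith) hN_le _
  have hr : 0 ≤ (N - E⁻¹) / (N - 1) :=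
    div_nonneg (by linarith [inv_le_one_of_one_le₀ hE]) (by linarith)
  refine sub_div_sub_le_of_mul_le
    (sub_inv_div_sub_one_mul_one_add_one_div (by linarith) (by positivity) (by linarith)) ?_ ?_
  · calc (N - E⁻¹) / (N - 1) * (δ / ((N * E) ^ (K - 1) - 1))
        ≤ E * (δ / (N ^ (K - 1) - 1)) :=
          mul_le_mul (sub_inv_div_sub_one_le hN hE)
            (div_le_div_of_nonneg_left hδ0 (by linarith) (by linarith))
            (div_nonneg hδ0 (by linarith)) (by linarith)
      _ = δ * E / (N ^ (K - 1) - 1) := by ring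
  · have := div_sub_one_le_one_div_sub_one (by linarith) (by linarith) hδ2
    linarith
end

section
/- For all real N ≥ 2, integers K ≥ 2, ε ≥ 0, and δ with 0 ≤ δ ≤ δ2(ε) = ((N·e^ε)^(K-1)-1)/((N·e^ε-1)·(N·e^ε)^(K-1)), one has α2(ε,δ) ≤ α1(ε,δ), where α2(ε,δ) = 1/(N·e^ε - 1) - δ·(N·e^ε)^(K-1)/((N·e^ε)^(K-1) - 1) and α1(ε,δ) = 1/(N-1) - δ·(e^ε + N^(K-1) - 1)/(N^(K-1) - 1). -/
private lemma aux_geom (E : ℝ) (hE : 1 ≤ E) : ∀ k : ℕ, E^k * E - 1 ≤ ((k:ℝ)+1) * E^k * (E-1) := by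
  intro k
  induction k with
  | zero => norm_num
  | succ k ih =>
    have hE0 : (0:ℝ) ≤ E := by linarith
    have h1 : E * (E^k * E - 1) ≤ E * (((k:ℝ)+1) * E^k * (E-1)) :=
      mul_le_mul_of_nonneg_left ih hE0
    have h2 : (1:ℝ) ≤ E^k * E := by
      rw [← pow_succ]; exact one_le_pow₀ hE
    rw [pow_succ]
    push_cast
    nlinarith [h1, mul_nonneg (sub_nonneg.2 h2) (sub_nonneg.2 hE)]

private lemma aux_pow_ge (N : ℝ) (hN : 2 ≤ N) : ∀ k : ℕ, 2 ≤ k → ((k:ℝ)+2) ≤ N^k := by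
  intro k
  induction k with
  | zero => omega
  | succ k ih =>
    intro hk
    rcases Nat.lt_or_ge k 2 with h | h
    · interval_cases k
      · omega
      · push_cast; nlinarith
    · have := ih h
      have hNk : (0:ℝ) ≤ N^k := by positivity
      push_cast
      push_cast at this
      calc ((k:ℝ)+1+2) ≤ 2 * ((k:ℝ)+2) := by linarith [Nat.cast_nonneg (α := ℝ) k]
        _ ≤ N * N^k := by nlinarith
        _ = N^(k+1) := by ring

private lemma key_ineq (N E : ℝ) (k : ℕ) (hN : 2 ≤ N) (hE : 1 ≤ E) (hk : 1 ≤ k) :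
    (N - 1) * ((N*E)^k - 1) * (E + N^k - 1) ≤ (N*E - 1) * (N*E)^k * (N^k - 1) := by
  rw [mul_pow]
  have ha : (1:ℝ) ≤ N^k := one_le_pow₀ (by linarith)
  have hb : (1:ℝ) ≤ E^k := one_le_pow₀ hE
  rcases Nat.lt_or_ge k 2 with h2 | h2
  · have : k = 1 := by omega
    subst this
    nlinarith [mul_nonneg (mul_nonneg (mul_nonneg (by linarith : (0:ℝ) ≤ N-1)
      (by nlinarith : (0:ℝ) ≤ N*E-1)) (by linarith : (0:ℝ) ≤ N-1))
      (by linarith : (0:ℝ) ≤ E-1)]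
  · have hA := aux_geom E hE k
    have hB : (k:ℝ)+1 ≤ N^k - 1 := by linarith [aux_pow_ge N hN k h2]
    have habE : (0:ℝ) ≤ N^k * E^k * (E-1) := by
      have : (0:ℝ) ≤ E - 1 := by linarith
      positivity
    have h1 : (N-1) * N^k * (E^k * E - 1) ≤ (N-1) * N^k * (((k:ℝ)+1) * E^k * (E-1)) := by
      apply mul_le_mul_of_nonneg_left hA
      have : (0:ℝ) ≤ N - 1 := by linarith
      positivity
    have h2' : (N-1) * ((k:ℝ)+1) ≤ N * (N^k - 1) := by
      nlinarith [Nat.cast_nonneg (α := ℝ) k]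
    have h2 : ((N-1) * ((k:ℝ)+1)) * (N^k * E^k * (E-1)) ≤ (N * (N^k - 1)) * (N^k * E^k * (E-1)) :=
      mul_le_mul_of_nonneg_right h2' habE
    nlinarith [h1, h2, mul_nonneg (by linarith : (0:ℝ) ≤ N-1) (by linarith : (0:ℝ) ≤ E-1)]

private lemma affine_combo {A0 A B0 B d δ : ℝ} (hd : 0 < d) (h0 : 0 ≤ δ) (hδ : δ ≤ d)
    (e0 : B0 ≤ A0) (ed : B0 - d * B ≤ A0 - d * A) :
    B0 - δ * B ≤ A0 - δ * A := by
  nlinarith [mul_nonneg (sub_nonneg.2 hδ) (sub_nonneg.2 e0), mul_nonneg h0 (sub_nonneg.2 ed)]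

theorem stmt_14 (N ε δ : ℝ) (K : ℕ) (hN : 2 ≤ N) (hK : 2 ≤ K) (hε : 0 ≤ ε)
    (hδ0 : 0 ≤ δ)
    (hδ2 : δ ≤ ((N * Real.exp ε)^(K-1) - 1)/((N * Real.exp ε - 1) * (N * Real.exp ε)^(K-1))) :
    1/(N * Real.exp ε - 1) - δ * (N * Real.exp ε)^(K-1)/((N * Real.exp ε)^(K-1) - 1)
      ≤ 1/(N-1) - δ * (Real.exp ε + N^(K-1) - 1)/(N^(K-1) - 1) := by
  set E := Real.exp ε with hEdef
  have hE : 1 ≤ E := Real.one_le_exp hε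
  set k : ℕ := K - 1 with hkdef
  have hk : 1 ≤ k := by omega
  have hk0 : k ≠ 0 := by omega
  set M : ℝ := N * E with hMdef
  have hM : 2 ≤ M := by nlinarith
  have hM1 : (1:ℝ) < M := by linarith
  have hN1 : (1:ℝ) < N := by linarith
  have hMk : (1:ℝ) < M^k := one_lt_pow₀ hM1 hk0
  have hNk : (1:ℝ) < N^k := one_lt_pow₀ hN1 hk0
  have hMkpos : (0:ℝ) < M^k := by linarith
  have hne1 : M - 1 ≠ 0 := by intro h; nlinarith
  have hne2 : M^k - 1 ≠ 0 := by intro h; nlinarith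
  have hne3 : M^k ≠ 0 := by intro h; nlinarith
  have hne4 : N^k - 1 ≠ 0 := by intro h; nlinarith
  have hne5 : N - 1 ≠ 0 := by intro h; nlinarith
  have hd : 0 < (M^k - 1)/((M - 1) * M^k) := by
    apply div_pos (by linarith)
    exact mul_pos (by linarith) hMkpos
  set d : ℝ := (M^k - 1)/((M - 1) * M^k) with hddef
  rw [mul_div_assoc, mul_div_assoc]
  apply affine_combo hd hδ0 hδ2
  · apply one_div_le_one_div_of_le (by linarith)
    nlinarith
  · have key : (N-1) * (M^k - 1) * (E + N^k - 1) ≤ (M - 1) * M^k * (N^k - 1) := by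
      rw [hMdef]; exact key_ineq N E k hN hE hk
    have hL : 1/(M-1) - d * (M^k/(M^k-1)) = 0 := by
      rw [hddef]
      field_simp
      ring
    have h5 : d * ((E + N^k - 1)/(N^k-1)) =
        ((M^k-1) * (E + N^k - 1)) / ((M-1) * M^k * (N^k-1)) := by
      rw [hddef]
      field_simp
    rw [hL, h5]
    have hfin : ((M^k-1) * (E + N^k - 1)) / ((M-1) * M^k * (N^k-1)) ≤ 1/(N-1) := by
      rw [div_le_div_iff₀ (by apply mul_pos (mul_pos (by linarith) hMkpos); linarith)
        (by linarith : (0:ℝ) < N - 1)]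
      nlinarith [key]
    linarith [hfin]
end
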